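/- arXiv:2411.12529 — 5 statements merged into one kernel-verified Lean document; each statement's English description precedes it below -/
import Mathlib

section
/- In a bouquet of geometric lattices P, if a maximal chain C with greatest element r_i is generated by a tuple of atoms (a_{i_1},…,a_{i_k}) and a maximal chain C' with greatest element r_j is generated by a permutation (a_{σ(i_1)},…,a_{σ(i_k)}) of the same tuple, then r_i = r_j (in particular, distinct maximal elements admit no common generating multiset of atoms). -/
/-!
Statement 0: determinant of the chain matrix of a bouquet of geometric lattices.
-/

open scoped Classical

/-- A partial order is a *geometric lattice order* if it is a finite lattice
(all pairwise meets and joins exist), it is atomistic (every element is the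
least upper bound of the atoms below it, atoms being the covers of the least
element), and it is semimodular. -/
def IsGeometricLatticeOrder (α : Type*) [PartialOrder α] : Prop :=
  Finite α ∧
  (∀ a b : α, ∃ m, IsGLB {a, b} m) ∧
  (∀ a b : α, ∃ j, IsLUB {a, b} j) ∧
  (∃ bot : α, IsBot bot ∧ ∀ x : α, IsLUB {a : α | bot ⋖ a ∧ a ≤ x} x) ∧
  (∀ x y m j : α, IsGLB {x, y} m → IsLUB {x, y} j → m ⋖ x → y ⋖ j)

/-- A *bouquet of geometric lattices* is a finite meet-semilattice in which
every (nonempty) closed interval is a geometric lattice. -/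
def IsBouquetOfGeometricLattices (P : Type*) [PartialOrder P] : Prop :=
  Finite P ∧
  (∀ a b : P, ∃ m, IsGLB {a, b} m) ∧
  (∀ a b : P, a ≤ b → IsGeometricLatticeOrder (Set.Icc a b))

/-- A maximal chain `[x₁ ⋖ x₂ ⋖ … ⋖ x_k]`, recorded as a list: it is a
saturated chain starting just above the least element `b` (so `x₁` is an atom)
whose last element has no cover. -/
def IsMaximalChain {α : Type*} [PartialOrder α] (b : α) (L : List α) : Prop :=
  L ≠ [] ∧ List.Chain (· ⋖ ·) b L ∧ ∀ y : α, ¬ L.getLastD b ⋖ y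

/-- The chain (list) `L = [x₁, …, x_k]` is *generated* by the tuple of atoms
`A = (a₁, …, a_k)` if `xᵢ = a₁ ∨ … ∨ aᵢ` for all `i`. -/
def GeneratedBy {α : Type*} [PartialOrder α] (b : α) (A L : List α) : Prop :=
  A.length = L.length ∧ (∀ a ∈ A, b ⋖ a) ∧
    ∀ i < L.length, IsLUB {a : α | a ∈ A.take (i + 1)} (L.getD i b)

/-- A labeling assigns to every element `x` (other than the least element) an
atom `l x ≤ x`. -/
def IsLabeling {α : Type*} [PartialOrder α] (b : α) (l : α → α) : Prop :=
  ∀ x : α, x ≠ b → (b ⋖ l x) ∧ l x ≤ x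

/-- A maximal chain `[x₁ ⋖ … ⋖ x_k]` is *neat* if `l xᵢ ≤ xᵢ` but
`l xᵢ ≰ x_{i-1}` for all `i` (where `x₀ = b`). -/
def IsNeatChain {α : Type*} [PartialOrder α] (b : α) (l : α → α) (L : List α) : Prop :=
  IsMaximalChain b L ∧
    ∀ i < L.length, l (L.getD i b) ≤ L.getD i b ∧ ¬ l (L.getD i b) ≤ (b :: L).getD i b

/-- The type of neat maximal chains. -/
abbrev NeatChain (α : Type*) [PartialOrder α] (b : α) (l : α → α) : Type _ :=
  {L : List α // IsNeatChain b l L}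

/-- The chain matrix: indexed by pairs of neat maximal chains `C, C'`, its
entry is the sum of `sgn σ · w_{a₁} ⋯ w_{a_k}` over all tuples of atoms
`(a₁,…,a_k)` generating `C` and permutations `σ` such that the permuted tuple
generates `C'`.  (If `|C| ≠ |C'|` no tuple works and the entry is `0`.) -/
noncomputable def chainMatrix {α : Type*} [PartialOrder α] [Fintype α] (b : α) (l : α → α)
    (R : Type*) [CommRing R] (w : α → R) :
    Matrix (NeatChain α b l) (NeatChain α b l) R := fun C C' =>
  ∑ f : Fin C.1.length → {a : α // b ⋖ a},
    ∑ σ : Equiv.Perm (Fin C.1.length),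
      if GeneratedBy b ((List.ofFn f).map Subtype.val) C.1 ∧
          GeneratedBy b ((List.ofFn (f ∘ σ)).map Subtype.val) C'.1 then
        (Equiv.Perm.sign σ : ℤ) • ∏ i, w ((f i : α))
      else 0


private lemma getLastD_eq_getD_aux {α : Type*} (l : List α) (d : α) (h : l ≠ []) :
    l.getLastD d = l.getD (l.length - 1) d := by
  induction l generalizing d with
  | nil => simp at h
  | cons a l ih =>
    cases l with
    | nil => simp
    | cons b l =>
      have := ih a (by simp)
      simp only [List.getLastD_cons] at this ⊢
      rw [this]
      simp

/-- If a maximal chain `L` is generated by a tuple of atoms `A` and a maximal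
chain `L'` is generated by a permutation of the same tuple, then the two
chains have the same greatest element: distinct maximal elements admit no
common generating multiset of atoms. -/
theorem last_eq_of_generatedBy_perm
    (P : Type*) [PartialOrder P] [Fintype P]
    (hP : IsBouquetOfGeometricLattices P)
    (b : P) (hb : IsBot b)
    (L L' : List P) (hL : IsMaximalChain b L) (hL' : IsMaximalChain b L')
    (A : List P) (σ : Equiv.Perm (Fin A.length))
    (hgen : GeneratedBy b A L)
    (hgen' : GeneratedBy b (List.ofFn fun i => A.get (σ i)) L') :
    L.getLastD b = L'.getLastD b := by
  obtain ⟨hlen, -, hlub⟩ := hgen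
  obtain ⟨hlen', -, hlub'⟩ := hgen'
  have hLne : L ≠ [] := hL.1
  have hL'ne : L' ≠ [] := hL'.1
  have hpos : 0 < L.length := List.length_pos_iff.mpr hLne
  have hpos' : 0 < L'.length := List.length_pos_iff.mpr hL'ne
  have hlenA : A.length = L.length := hlen
  have hlenA' : A.length = L'.length := by simpa using hlen'
  have h1 := hlub (L.length - 1) (by omega)
  have h2 := hlub' (L'.length - 1) (by omega)
  rw [Nat.sub_add_cancel hpos] at h1
  rw [Nat.sub_add_cancel hpos'] at h2
  have hA : A.take L.length = A := List.take_of_length_le (by omega)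
  have hA' : (List.ofFn fun i => A.get (σ i)).take L'.length =
      List.ofFn fun i => A.get (σ i) := List.take_of_length_le (by simp; omega)
  rw [hA] at h1
  rw [hA'] at h2
  have hset : {a : P | a ∈ (List.ofFn fun i => A.get (σ i))} = {a : P | a ∈ A} := by
    ext a
    simp only [Set.mem_setOf_eq]
    constructor
    · intro h
      obtain ⟨i, rfl⟩ := List.mem_ofFn.mp h
      exact A.get_mem _
    · intro h
      obtain ⟨i, rfl⟩ := List.mem_iff_get.mp h
      exact List.mem_ofFn.mpr ⟨σ.symm i, by simp⟩
  rw [hset] at h2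
  rw [getLastD_eq_getD_aux L b hLne, getLastD_eq_getD_aux L' b hL'ne]
  exact h1.unique h2
end

section
/- Let (E, 𝓛) be a complex of oriented matroids (COM). Then the poset Z on the collection of zero sets {z(X) : X ∈ 𝓛}, ordered by inclusion, is a bouquet of geometric lattices; that is, Z is a meet-semilattice in which every closed interval is a geometric lattice. -/
/-!
Statement 4: the poset of zero sets of a COM is a bouquet of geometric
lattices.
-/

open scoped Classical

/-- Composition of sign vectors: `(X ∘ Y) e = X e` if `X e ≠ 0`, else `Y e`. -/
def SignVec.comp {E : Type*} (X Y : E → SignType) : E → SignType :=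
  fun e => if X e = 0 then Y e else X e

/-- The zero set `z(X) = {e | X e = 0}` of a sign vector. -/
def SignVec.zeroSet {E : Type*} (X : E → SignType) : Set E := {e | X e = 0}

/-- Face symmetry (FS): `X ∘ (-Y) ∈ 𝓛` for all `X, Y ∈ 𝓛`. -/
def FaceSymmetry {E : Type*} (𝓛 : Set (E → SignType)) : Prop :=
  ∀ X ∈ 𝓛, ∀ Y ∈ 𝓛, SignVec.comp X (-Y) ∈ 𝓛

/-- Strong elimination (SE): for all `X, Y ∈ 𝓛` and `e` in the separator
`S(X,Y)` there is `Z ∈ 𝓛` with `Z e = 0` and `Z f = (X ∘ Y) f` for all `f`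
outside the separator. -/
def StrongElimination {E : Type*} (𝓛 : Set (E → SignType)) : Prop :=
  ∀ X ∈ 𝓛, ∀ Y ∈ 𝓛, ∀ e, X e = -Y e ∧ X e ≠ 0 →
    ∃ Z ∈ 𝓛, Z e = 0 ∧ ∀ f, ¬(X f = -Y f ∧ X f ≠ 0) → Z f = SignVec.comp X Y f

/-- A complex of oriented matroids (COM). -/
def IsCOM {E : Type*} (𝓛 : Set (E → SignType)) : Prop :=
  FaceSymmetry 𝓛 ∧ StrongElimination 𝓛

/-! ### Auxiliary lemmas about sign vectors -/

section Aux

variable {E : Type*}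

lemma signType_eq_of_ne_neg : ∀ a b : SignType, a ≠ 0 → b ≠ 0 → a ≠ -b → a = b := by decide

lemma signType_ne_neg_self : ∀ a : SignType, a ≠ 0 → a ≠ -a := by decide

lemma signType_neg_eq_zero : ∀ a : SignType, -a = 0 ↔ a = 0 := by decide

lemma comp_apply_pos {X Y : E → SignType} {e : E} (h : X e = 0) :
    SignVec.comp X Y e = Y e := if_pos h

lemma comp_apply_neg {X Y : E → SignType} {e : E} (h : X e ≠ 0) :
    SignVec.comp X Y e = X e := if_neg h

lemma comp_eq_zero_iff {X Y : E → SignType} {e : E} :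
    SignVec.comp X Y e = 0 ↔ X e = 0 ∧ Y e = 0 := by
  unfold SignVec.comp
  by_cases h : X e = 0 <;> simp [h]

lemma zeroSet_compNeg (X Y : E → SignType) :
    SignVec.zeroSet (SignVec.comp X (-Y)) = SignVec.zeroSet X ∩ SignVec.zeroSet Y := by
  ext g
  simp only [SignVec.zeroSet, Set.mem_inter_iff, Set.mem_setOf_eq, comp_eq_zero_iff,
    Pi.neg_apply, signType_neg_eq_zero]

lemma comp_mem {𝓛 : Set (E → SignType)} (hFS : FaceSymmetry 𝓛)
    {X Y : E → SignType} (hX : X ∈ 𝓛) (hY : Y ∈ 𝓛) : SignVec.comp X Y ∈ 𝓛 := by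
  have h2 := hFS X hX _ (hFS X hX Y hY)
  have heq : SignVec.comp X (-(SignVec.comp X (-Y))) = SignVec.comp X Y := by
    funext e
    by_cases h : X e = 0 <;> simp [SignVec.comp, h]
  rwa [heq] at h2

/-- The key exchange lemma, proved from strong elimination and face symmetry. -/
lemma exchange {𝓛 : Set (E → SignType)} (hFS : FaceSymmetry 𝓛) (hSE : StrongElimination 𝓛)
    {B X Z : E → SignType} (hB : B ∈ 𝓛) (hX : X ∈ 𝓛) (hZ : Z ∈ 𝓛)
    (hXB : SignVec.zeroSet X ⊆ SignVec.zeroSet B)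
    (hFZ : SignVec.zeroSet X ⊆ SignVec.zeroSet Z)
    {e f : E} (heB : B e = 0) (heX : X e ≠ 0) (heZ : Z e ≠ 0)
    (hfX : X f ≠ 0) (hfZ : Z f = 0) :
    ∃ W ∈ 𝓛, SignVec.zeroSet X ⊆ SignVec.zeroSet W ∧ W e = 0 ∧ W f ≠ 0 ∧
      SignVec.zeroSet W ⊆ SignVec.zeroSet B := by
  set X' := SignVec.comp B X with hX'def
  have hX'mem : X' ∈ 𝓛 := comp_mem hFS hB hX
  have hX'e : X' e = X e := comp_apply_pos heB
  -- choose the covector s (either B∘Z or B∘(-Z)) so that X' e = -(s e)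
  obtain ⟨s, hs𝓛, hse, hsB, hsz⟩ :
      ∃ s ∈ 𝓛, X' e = -(s e) ∧ (∀ g, B g ≠ 0 → s g = B g) ∧
        (∀ g, B g = 0 → Z g = 0 → s g = 0) := by
    by_cases hc : X e = -Z e
    · refine ⟨SignVec.comp B Z, comp_mem hFS hB hZ, ?_, ?_, ?_⟩
      · rw [hX'e, comp_apply_pos heB, hc]
      · intro g hg; exact comp_apply_neg hg
      · intro g hg1 hg2; rw [comp_apply_pos hg1, hg2]
    · have hXe : X e = Z e := signType_eq_of_ne_neg _ _ heX heZ hc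
      refine ⟨SignVec.comp B (-Z), hFS B hB Z hZ, ?_, ?_, ?_⟩
      · rw [hX'e, comp_apply_pos heB, hXe, Pi.neg_apply, neg_neg]
      · intro g hg; exact comp_apply_neg hg
      · intro g hg1 hg2
        rw [comp_apply_pos hg1, Pi.neg_apply, hg2, neg_zero]
  have hX'e0 : X' e ≠ 0 := by rw [hX'e]; exact heX
  obtain ⟨W, hW, hWe, hWoff⟩ := hSE X' hX'mem s hs𝓛 e ⟨hse, hX'e0⟩
  refine ⟨W, hW, ?_, hWe, ?_, ?_⟩
  · -- zeroSet X ⊆ zeroSet W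
    intro g hg
    have hXg : X g = 0 := hg
    have hBg : B g = 0 := hXB hg
    have hZg : Z g = 0 := hFZ hg
    have hX'g : X' g = 0 := by rw [hX'def, comp_apply_pos hBg]; exact hXg
    have hsg : s g = 0 := hsz g hBg hZg
    have hoff : ¬(X' g = -(s g) ∧ X' g ≠ 0) := by
      rintro ⟨-, h2⟩; exact h2 hX'g
    show W g = 0
    rw [hWoff g hoff, comp_apply_pos hX'g, hsg]
  · -- W f ≠ 0
    by_cases hBf : B f = 0
    · have hsf : s f = 0 := hsz f hBf hfZ
      have hX'f : X' f = X f := comp_apply_pos hBf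
      have hX'f0 : X' f ≠ 0 := by rw [hX'f]; exact hfX
      have hoff : ¬(X' f = -(s f) ∧ X' f ≠ 0) := by
        rintro ⟨h1, h2⟩; rw [hsf, neg_zero] at h1; exact h2 h1
      rw [hWoff f hoff, comp_apply_neg hX'f0, hX'f]
      exact hfX
    · have hX'f : X' f = B f := comp_apply_neg hBf
      have hX'f0 : X' f ≠ 0 := by rw [hX'f]; exact hBf
      have hoff : ¬(X' f = -(s f) ∧ X' f ≠ 0) := by
        rintro ⟨h1, -⟩
        rw [hX'f, hsB f hBf] at h1
        exact signType_ne_neg_self (B f) hBf h1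
      rw [hWoff f hoff, comp_apply_neg hX'f0, hX'f]
      exact hBf
  · -- zeroSet W ⊆ zeroSet B
    intro g hg
    show B g = 0
    by_contra hBg
    have hX'g : X' g = B g := comp_apply_neg hBg
    have hX'g0 : X' g ≠ 0 := by rw [hX'g]; exact hBg
    have hoff : ¬(X' g = -(s g) ∧ X' g ≠ 0) := by
      rintro ⟨h1, -⟩
      rw [hX'g, hsB g hBg] at h1
      exact signType_ne_neg_self (B g) hBg h1
    have hWg : W g = 0 := hg
    rw [hWoff g hoff, comp_apply_neg hX'g0, hX'g] at hWg
    exact hBg hWg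

end Aux

/-! ### Transfer of `IsGeometricLatticeOrder` along order isomorphisms -/

section Transfer

variable {α β : Type*} [PartialOrder α] [PartialOrder β]

lemma orderIso_isGLB_image (e : α ≃o β) {s : Set α} {x : α} (h : IsGLB s x) :
    IsGLB (e '' s) (e x) := by
  constructor
  · rintro b ⟨c, hc, rfl⟩
    exact e.le_iff_le.mpr (h.1 hc)
  · intro u hu
    have h1 : e.symm u ∈ lowerBounds s := fun c hc =>
      e.symm_apply_le.mpr (hu (Set.mem_image_of_mem e hc))
    exact e.symm_apply_le.mp (h.2 h1)

lemma orderIso_isLUB_image (e : α ≃o β) {s : Set α} {x : α} (h : IsLUB s x) :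
    IsLUB (e '' s) (e x) := by
  constructor
  · rintro b ⟨c, hc, rfl⟩
    exact e.le_iff_le.mpr (h.1 hc)
  · intro u hu
    have h1 : e.symm u ∈ upperBounds s := fun c hc =>
      e.le_symm_apply.mpr (hu (Set.mem_image_of_mem e hc))
    exact e.le_symm_apply.mp (h.2 h1)

lemma orderIso_covBy (e : α ≃o β) {x y : α} (h : x ⋖ y) : e x ⋖ e y := by
  refine ⟨e.lt_iff_lt.mpr h.1, ?_⟩
  intro c h1 h2
  have h1' : x < e.symm c := by
    have := e.symm.lt_iff_lt.mpr h1
    rwa [e.symm_apply_apply] at this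
  have h2' : e.symm c < y := by
    have := e.symm.lt_iff_lt.mpr h2
    rwa [e.symm_apply_apply] at this
  exact h.2 h1' h2'

lemma isGeometricLatticeOrder_of_orderIso (e : α ≃o β)
    (h : IsGeometricLatticeOrder α) : IsGeometricLatticeOrder β := by
  obtain ⟨hfin, hglb, hlub, ⟨bot, hbot, hatom⟩, hsemi⟩ := h
  have : Finite α := hfin
  refine ⟨Finite.of_equiv α e.toEquiv, ?_, ?_, ?_, ?_⟩
  · intro b1 b2
    obtain ⟨m, hm⟩ := hglb (e.symm b1) (e.symm b2)
    refine ⟨e m, ?_⟩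
    have h1 := orderIso_isGLB_image e hm
    rwa [Set.image_pair, e.apply_symm_apply, e.apply_symm_apply] at h1
  · intro b1 b2
    obtain ⟨j, hj⟩ := hlub (e.symm b1) (e.symm b2)
    refine ⟨e j, ?_⟩
    have h1 := orderIso_isLUB_image e hj
    rwa [Set.image_pair, e.apply_symm_apply, e.apply_symm_apply] at h1
  · refine ⟨e bot, fun x => ?_, fun x => ?_⟩
    · have h1 := e.le_iff_le.mpr (hbot (e.symm x))
      rwa [e.apply_symm_apply] at h1
    · have h1 := orderIso_isLUB_image e (hatom (e.symm x))
      have himg : e '' {a : α | bot ⋖ a ∧ a ≤ e.symm x} = {a : β | e bot ⋖ a ∧ a ≤ x} := by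
        ext c
        constructor
        · rintro ⟨d, ⟨hd1, hd2⟩, rfl⟩
          exact ⟨orderIso_covBy e hd1, e.le_symm_apply.mp hd2⟩
        · rintro ⟨h1, h2⟩
          refine ⟨e.symm c, ⟨?_, e.symm.le_iff_le.mpr h2⟩, e.apply_symm_apply c⟩
          have h3 := orderIso_covBy e.symm h1
          rwa [e.symm_apply_apply] at h3
      rwa [himg, e.apply_symm_apply] at h1
  · intro x y m j h1 h2 h3
    have h1' := orderIso_isGLB_image e.symm h1
    rw [Set.image_pair] at h1'
    have h2' := orderIso_isLUB_image e.symm h2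
    rw [Set.image_pair] at h2'
    have h3' : e.symm m ⋖ e.symm x := orderIso_covBy e.symm h3
    have h4 := hsemi _ _ _ _ h1' h2' h3'
    have h5 := orderIso_covBy e h4
    rwa [e.apply_symm_apply, e.apply_symm_apply] at h5

end Transfer

/-! ### The abstract geometric-lattice lemma for set families -/

theorem geom_of_family {E : Type*} [Finite E] (𝒵 : Set (Set E)) (Ta Tb : Set E)
    (hTa : Ta ∈ 𝒵) (hTb : Tb ∈ 𝒵)
    (hbot : ∀ S ∈ 𝒵, Ta ⊆ S) (htop : ∀ S ∈ 𝒵, S ⊆ Tb)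
    (hInter : ∀ S ∈ 𝒵, ∀ T ∈ 𝒵, S ∩ T ∈ 𝒵)
    (hP5 : ∀ F ∈ 𝒵, ∀ Zs ∈ 𝒵, ∀ e f : E, e ∈ Tb → e ∉ F → f ∉ F →
      F ⊆ Zs → f ∈ Zs → e ∉ Zs → ∃ W ∈ 𝒵, F ⊆ W ∧ e ∈ W ∧ f ∉ W) :
    IsGeometricLatticeOrder {S : Set E // S ∈ 𝒵} := by
  -- the closure operator
  have hclE : ∀ K : Set E, K ⊆ Tb → ∃ C, C ∈ 𝒵 ∧ K ⊆ C ∧ ∀ S ∈ 𝒵, K ⊆ S → C ⊆ S := by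
    intro K hK
    obtain ⟨C, hC, hmin⟩ : ∃ C ∈ {S | S ∈ 𝒵 ∧ K ⊆ S},
        ∀ a ∈ {S | S ∈ 𝒵 ∧ K ⊆ S}, id a ≤ id C → id C = id a := by
      obtain ⟨C, hC, hm⟩ := Set.Finite.exists_minimalFor id {S | S ∈ 𝒵 ∧ K ⊆ S}
        (Set.toFinite _) ⟨Tb, hTb, hK⟩
      exact ⟨C, hC, fun a ha hle => le_antisymm (hm ha hle) hle⟩
    refine ⟨C, hC.1, hC.2, fun S hS hKS => ?_⟩
    have h1 : C ∩ S ∈ {S | S ∈ 𝒵 ∧ K ⊆ S} := ⟨hInter _ hC.1 _ hS, Set.subset_inter hC.2 hKS⟩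
    have h2 : id C = id (C ∩ S) := hmin _ h1 Set.inter_subset_left
    exact (le_of_eq h2).trans Set.inter_subset_right
  choose cl hcl1 hcl2 hcl3 using hclE
  set α := {S : Set E // S ∈ 𝒵} with hα
  have hsubTb : ∀ x : α, x.1 ⊆ Tb := fun x => htop _ x.2
  -- meets
  have hglb : ∀ x y : α, IsGLB {x, y} (⟨x.1 ∩ y.1, hInter _ x.2 _ y.2⟩ : α) := by
    intro x y
    constructor
    · intro c hc
      rcases hc with rfl | hc
      · show c.1 ∩ y.1 ⊆ c.1
        exact Set.inter_subset_left
      · rcases hc with rfl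
        show x.1 ∩ c.1 ⊆ c.1
        exact Set.inter_subset_right
    · intro c hc
      show c.1 ⊆ x.1 ∩ y.1
      exact Set.subset_inter (hc (Set.mem_insert _ _)) (hc (Set.mem_insert_of_mem _ rfl))
  -- joins
  have hlub : ∀ x y : α, IsLUB {x, y}
      (⟨cl (x.1 ∪ y.1) (Set.union_subset (hsubTb x) (hsubTb y)), hcl1 _ _⟩ : α) := by
    intro x y
    constructor
    · intro c hc
      rcases hc with rfl | hc
      · show c.1 ⊆ cl _ _
        exact Set.subset_union_left.trans (hcl2 _ _)
      · rcases hc with rfl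
        show c.1 ⊆ cl _ _
        exact Set.subset_union_right.trans (hcl2 _ _)
    · intro c hc
      show cl _ _ ⊆ c.1
      exact hcl3 _ _ c.1 c.2
        (Set.union_subset (hc (Set.mem_insert _ _)) (hc (Set.mem_insert_of_mem _ rfl)))
  -- the covering lemma: F ⋖ cl (insert e F) for e ∈ Tb \ F
  have hcov : ∀ (F : Set E) (hF : F ∈ 𝒵) (e : E) (heF : e ∉ F)
      (hsub : insert e F ⊆ Tb),
      (⟨F, hF⟩ : α) ⋖ ⟨cl (insert e F) hsub, hcl1 _ _⟩ := by
    intro F hF e heF hsub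
    have hFC : F ⊆ cl (insert e F) hsub := (Set.subset_insert _ _).trans (hcl2 _ _)
    have heC : e ∈ cl (insert e F) hsub := hcl2 _ _ (Set.mem_insert _ _)
    constructor
    · refine lt_of_le_of_ne hFC ?_
      intro hEq
      apply heF
      have hv : F = cl (insert e F) hsub := congrArg Subtype.val hEq
      rw [hv]; exact heC
    · intro c h1 h2
      obtain ⟨S, hS⟩ := c
      have hFSub : F ⊆ S := le_of_lt h1
      have hSC : S ⊆ cl (insert e F) hsub := le_of_lt h2
      have heS : e ∉ S := by
        intro heS
        have hCS : cl (insert e F) hsub ⊆ S := hcl3 _ _ S hS (Set.insert_subset heS hFSub)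
        exact (ne_of_lt h2) (Subtype.ext (le_antisymm hSC hCS))
      have hssub : F ⊂ S := by
        rw [Set.ssubset_iff_subset_ne]
        exact ⟨hFSub, fun hEq => ne_of_lt h1 (Subtype.ext hEq)⟩
      obtain ⟨f, hfS, hfF⟩ := Set.exists_of_ssubset hssub
      obtain ⟨W, hW, hFW, heW, hfW⟩ :=
        hP5 F hF S hS e f (hsub (Set.mem_insert _ _)) heF hfF hFSub hfS heS
      have hCW : cl (insert e F) hsub ⊆ W := hcl3 _ _ W hW (Set.insert_subset heW hFW)
      exact hfW (hCW (hSC hfS))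
  -- assemble
  refine ⟨inferInstance, fun x y => ⟨_, hglb x y⟩, fun x y => ⟨_, hlub x y⟩,
    ⟨⟨Ta, hTa⟩, fun x => hbot _ x.2, ?_⟩, ?_⟩
  · -- atomistic
    intro x
    constructor
    · rintro a ⟨-, hax⟩
      exact hax
    · intro u hu
      show x.1 ⊆ u.1
      intro e he
      by_cases heu : e ∈ u.1
      · exact heu
      · exfalso
        have heTa : e ∉ Ta := fun hmem => heu (hbot _ u.2 hmem)
        have hsub : insert e Ta ⊆ Tb := Set.insert_subset (hsubTb x he) (htop _ hTa)
        have hcova := hcov Ta hTa e heTa hsub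
        have haux : (⟨cl (insert e Ta) hsub, hcl1 _ _⟩ : α) ≤ x :=
          hcl3 _ _ x.1 x.2 (Set.insert_subset he (hbot _ x.2))
        have hmem : (⟨cl (insert e Ta) hsub, hcl1 _ _⟩ : α) ∈
            {a : α | (⟨Ta, hTa⟩ : α) ⋖ a ∧ a ≤ x} := ⟨hcova, haux⟩
        have hle := hu hmem
        exact heu (hle (hcl2 _ _ (Set.mem_insert _ _)))
  · -- semimodular
    intro x y m j hm hj hmx
    have hmeq : m = ⟨x.1 ∩ y.1, hInter _ x.2 _ y.2⟩ := hm.unique (hglb x y)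
    have hm1 : m.1 = x.1 ∩ y.1 := congrArg Subtype.val hmeq
    have hmxlt : m.1 ⊂ x.1 := by
      rw [Set.ssubset_iff_subset_ne]
      exact ⟨le_of_lt hmx.1, fun hEq => ne_of_lt hmx.1 (Subtype.ext hEq)⟩
    obtain ⟨e, hex, hem⟩ := Set.exists_of_ssubset hmxlt
    have hey : e ∉ y.1 := by
      intro hy
      apply hem
      rw [hm1]
      exact ⟨hex, hy⟩
    have hmy : m.1 ⊆ y.1 := by rw [hm1]; exact Set.inter_subset_right
    have hmxsub : m.1 ⊆ x.1 := by rw [hm1]; exact Set.inter_subset_left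
    -- x = cl (insert e m.1)
    have hsubx : insert e m.1 ⊆ Tb := Set.insert_subset (hsubTb x hex) (hsubTb m)
    have hcx : (⟨cl (insert e m.1) hsubx, hcl1 _ _⟩ : α) = x := by
      have h1 : m < ⟨cl (insert e m.1) hsubx, hcl1 _ _⟩ := by
        refine lt_of_le_of_ne (show m.1 ⊆ cl _ _ from (Set.subset_insert _ _).trans (hcl2 _ _)) ?_
        intro hEq
        apply hem
        have hv : m.1 = cl (insert e m.1) hsubx := congrArg Subtype.val hEq
        rw [hv]
        exact hcl2 _ _ (Set.mem_insert _ _)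
      have h2 : (⟨cl (insert e m.1) hsubx, hcl1 _ _⟩ : α) ≤ x :=
        hcl3 _ _ x.1 x.2 (Set.insert_subset hex hmxsub)
      by_contra hne
      exact hmx.2 h1 (lt_of_le_of_ne h2 hne)
    -- j = cl (insert e y.1)
    have hsuby : insert e y.1 ⊆ Tb := Set.insert_subset (hsubTb x hex) (hsubTb y)
    have hjeq : j = ⟨cl (insert e y.1) hsuby, hcl1 _ _⟩ := by
      apply le_antisymm
      · apply hj.2
        intro c hc
        rcases hc with rfl | hc
        · -- x ≤ cl (insert e y.1)
          rw [← hcx]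
          show cl (insert e m.1) hsubx ⊆ cl (insert e y.1) hsuby
          refine hcl3 _ _ _ (hcl1 _ _) ?_
          exact Set.insert_subset (hcl2 _ _ (Set.mem_insert _ _))
            (hmy.trans ((Set.subset_insert _ _).trans (hcl2 _ _)))
        · rcases hc with rfl
          show c.1 ⊆ cl (insert e c.1) hsuby
          exact (Set.subset_insert _ _).trans (hcl2 _ _)
      · show cl (insert e y.1) hsuby ⊆ j.1
        refine hcl3 _ _ j.1 j.2 (Set.insert_subset ?_ ?_)
        · exact (hj.1 (Set.mem_insert _ _) : x ≤ j) hex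
        · exact (hj.1 (Set.mem_insert_of_mem _ rfl) : y ≤ j)
    rw [hjeq]
    exact hcov y.1 y.2 e hey hsuby

/-- **The zero sets of a COM form a bouquet of geometric lattices** (ordered
by inclusion). -/
theorem zeroSets_isBouquet (E : Type*) [Fintype E]
    (𝓛 : Set (E → SignType)) (h : IsCOM 𝓛) :
    IsBouquetOfGeometricLattices {S : Set E // S ∈ SignVec.zeroSet '' 𝓛} := by
  obtain ⟨hFS, hSE⟩ := h
  refine ⟨inferInstance, ?_, ?_⟩
  · -- meets
    intro a b
    obtain ⟨X, hX, hXS⟩ := a.2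
    obtain ⟨Y, hY, hYS⟩ := b.2
    refine ⟨⟨a.1 ∩ b.1, ⟨SignVec.comp X (-Y), hFS X hX Y hY, by
      rw [zeroSet_compNeg, hXS, hYS]⟩⟩, ?_⟩
    constructor
    · intro c hc
      rcases hc with rfl | hc
      · show c.1 ∩ b.1 ⊆ c.1
        exact Set.inter_subset_left
      · rcases hc with rfl
        show a.1 ∩ c.1 ⊆ c.1
        exact Set.inter_subset_right
    · intro c hc
      show c.1 ⊆ a.1 ∩ b.1
      exact Set.subset_inter (hc (Set.mem_insert _ _)) (hc (Set.mem_insert_of_mem _ rfl))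
  · -- intervals
    intro a b hab
    obtain ⟨Bv, hB, hzB⟩ := b.2
    have hab' : a.1 ⊆ b.1 := hab
    set 𝒵 : Set (Set E) := {S | S ∈ SignVec.zeroSet '' 𝓛 ∧ a.1 ⊆ S ∧ S ⊆ b.1} with h𝒵
    have hgeo : IsGeometricLatticeOrder {S : Set E // S ∈ 𝒵} := by
      refine geom_of_family 𝒵 a.1 b.1 ⟨a.2, subset_rfl, hab'⟩ ⟨b.2, hab', subset_rfl⟩
        (fun S hS => hS.2.1) (fun S hS => hS.2.2) ?_ ?_
      · rintro S ⟨⟨X, hX, rfl⟩, hS1, hS2⟩ T ⟨⟨Y, hY, rfl⟩, hT1, hT2⟩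
        exact ⟨⟨SignVec.comp X (-Y), hFS X hX Y hY, zeroSet_compNeg X Y⟩,
          Set.subset_inter hS1 hT1, Set.inter_subset_left.trans hS2⟩
      · rintro F ⟨⟨X, hX, rfl⟩, hF1, hF2⟩ Zs ⟨⟨Z, hZ, rfl⟩, hZ1, hZ2⟩ e f heTb heF hfF hFZs hfZs heZs
        have heB : Bv e = 0 := by rw [← hzB] at heTb; exact heTb
        have hXB : SignVec.zeroSet X ⊆ SignVec.zeroSet Bv := by rw [hzB]; exact hF2
        obtain ⟨W, hW, h1, h2, h3, h4⟩ :=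
          exchange hFS hSE hB hX hZ hXB hFZs heB heF heZs hfF hfZs
        refine ⟨SignVec.zeroSet W, ⟨⟨W, hW, rfl⟩, hF1.trans h1, ?_⟩, h1, h2, h3⟩
        rw [← hzB]; exact h4
    refine isGeometricLatticeOrder_of_orderIso ?_ hgeo
    exact {
      toFun := fun S => ⟨⟨S.1, S.2.1⟩, S.2.2.1, S.2.2.2⟩
      invFun := fun p => ⟨p.1.1, p.1.2, p.2.1, p.2.2⟩
      left_inv := fun S => rfl
      right_inv := fun p => Subtype.ext (Subtype.ext rfl)
      map_rel_iff' := Iff.rfl }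
end

section
/- Let (E, 𝓛) be a complex of oriented matroids (COM). Then every closed interval of the poset on {z(X) : X ∈ 𝓛}, ordered by inclusion, is a geometric lattice. -/
/-!
Statement 8: every closed interval of the poset of zero sets of a COM is a
geometric lattice.
-/

open scoped Classical

namespace COMAux

variable {E : Type*}

lemma st_opp : ∀ s t : SignType, s ≠ 0 → t ≠ 0 → s ≠ -t → s = t := by decide

lemma st_selfneg : ∀ s : SignType, s = -s → s = 0 := by decide

lemma st_negzero : ∀ s : SignType, (-s = 0) ↔ s = 0 := by decide

lemma mem_zeroSet {X : E → SignType} {e : E} : e ∈ SignVec.zeroSet X ↔ X e = 0 := Iff.rfl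

lemma comp_mem {𝓛 : Set (E → SignType)} (h : IsCOM 𝓛) {X Y : E → SignType}
    (hX : X ∈ 𝓛) (hY : Y ∈ 𝓛) : SignVec.comp X Y ∈ 𝓛 := by
  have h1 := h.1 X hX Y hY
  have h2 := h.1 X hX _ h1
  have : SignVec.comp X (-(SignVec.comp X (-Y))) = SignVec.comp X Y := by
    funext e
    by_cases he : X e = 0 <;> simp [SignVec.comp, he]
  rwa [this] at h2

lemma zeroSet_comp (X Y : E → SignType) :
    SignVec.zeroSet (SignVec.comp X Y) = SignVec.zeroSet X ∩ SignVec.zeroSet Y := by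
  ext e
  by_cases he : X e = 0 <;>
    simp [SignVec.zeroSet, SignVec.comp, he]

/-- Core construction via strong elimination. -/
lemma core {𝓛 : Set (E → SignType)} (h : IsCOM 𝓛) {W V X : E → SignType}
    (hW : W ∈ 𝓛) (hV : V ∈ 𝓛) (hX : X ∈ 𝓛) {p q : E}
    (hWX : SignVec.zeroSet W ⊆ SignVec.zeroSet X)
    (hXV : SignVec.zeroSet X ⊆ SignVec.zeroSet V)
    (hXp : X p ≠ 0) (hXq : X q = 0) (hWq : W q ≠ 0)
    (hVp : V p = 0) (hVq : V q = 0) :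
    ∃ Z ∈ 𝓛, Z p = 0 ∧ Z q ≠ 0 ∧
      SignVec.zeroSet W ⊆ SignVec.zeroSet Z ∧ SignVec.zeroSet Z ⊆ SignVec.zeroSet V := by
  have hWp : W p ≠ 0 := fun h0 => hXp (hWX h0)
  -- W₁ = V ∘ W
  set W₁ : E → SignType := SignVec.comp V W with hW₁def
  have hW₁ : W₁ ∈ 𝓛 := comp_mem h hV hW
  have hW₁p : W₁ p = W p := by simp [hW₁def, SignVec.comp, hVp]
  have hW₁q : W₁ q = W q := by simp [hW₁def, SignVec.comp, hVq]
  -- choose X'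
  obtain ⟨X', hX'mem, hX'p, hX'q, hX'W, hX'V⟩ :
      ∃ X' ∈ 𝓛, X' p = -W p ∧ X' q = 0 ∧
        (∀ f, W f = 0 → X' f = 0) ∧ (∀ f, V f ≠ 0 → X' f = V f) := by
    by_cases hc : X p = -W p
    · refine ⟨SignVec.comp V X, comp_mem h hV hX, ?_, ?_, ?_, ?_⟩
      · simp [SignVec.comp, hVp, hc]
      · simp [SignVec.comp, hVq, hXq]
      · intro f hf
        have hXf : X f = 0 := hWX hf
        have hVf : V f = 0 := hXV hXf
        simp [SignVec.comp, hVf, hXf]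
      · intro f hf; simp [SignVec.comp, hf]
    · have hc' : X p = W p := st_opp _ _ hXp hWp hc
      refine ⟨SignVec.comp V (-X), h.1 V hV X hX, ?_, ?_, ?_, ?_⟩
      · simp [SignVec.comp, hVp, hc']
      · simp [SignVec.comp, hVq, hXq]
      · intro f hf
        have hXf : X f = 0 := hWX hf
        have hVf : V f = 0 := hXV hXf
        simp [SignVec.comp, hVf, hXf]
      · intro f hf; simp [SignVec.comp, hf]
  -- strong elimination at p
  have hsep : X' p = -W₁ p ∧ X' p ≠ 0 := by
    constructor
    · rw [hX'p, hW₁p]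
    · rw [hX'p]; simpa [st_negzero] using hWp
  obtain ⟨Z, hZmem, hZp, hZ⟩ := h.2 X' hX'mem W₁ hW₁ p hsep
  refine ⟨Z, hZmem, hZp, ?_, ?_, ?_⟩
  · -- Z q ≠ 0
    have hq : ¬(X' q = -W₁ q ∧ X' q ≠ 0) := by
      rintro ⟨-, hne⟩; exact hne hX'q
    have := hZ q hq
    rw [this]
    simp [SignVec.comp, hX'q, hW₁q]
    exact hWq
  · -- zeroSet W ⊆ zeroSet Z
    intro f hf
    have hWf : W f = 0 := hf
    have hX'f : X' f = 0 := hX'W f hWf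
    have hW₁f : W₁ f = 0 := by
      have hVf : V f = 0 := hXV (hWX hf)
      simp [hW₁def, SignVec.comp, hVf, hWf]
    have hcond : ¬(X' f = -W₁ f ∧ X' f ≠ 0) := by
      rintro ⟨-, hne⟩; exact hne hX'f
    have := hZ f hcond
    show Z f = 0
    rw [this]
    simp [SignVec.comp, hX'f, hW₁f]
  · -- zeroSet Z ⊆ zeroSet V
    intro f hf
    by_contra hVf
    have hVf' : V f ≠ 0 := hVf
    have hX'f : X' f = V f := hX'V f hVf'
    have hW₁f : W₁ f = V f := by simp [hW₁def, SignVec.comp, hVf']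
    have hcond : ¬(X' f = -W₁ f ∧ X' f ≠ 0) := by
      rintro ⟨heq, -⟩
      rw [hX'f, hW₁f] at heq
      exact hVf' (st_selfneg _ heq)
    have := hZ f hcond
    have hZf : Z f = 0 := hf
    rw [hZf] at this
    have : V f = 0 := by
      by_cases h0 : X' f = 0
      · rw [hX'f] at h0; exact h0
      · simp [SignVec.comp, h0] at this
        rw [hX'f] at this; exact this.symm
    exact hVf' this

end COMAux

namespace COMAux

variable {E : Type*}

/-- The flats of the interval `[A, B]`. -/
def Flats (𝓛 : Set (E → SignType)) (A B : Set E) : Set (Set E) :=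
  {S | A ⊆ S ∧ S ⊆ B ∧ S ∈ SignVec.zeroSet '' 𝓛}

def clos (𝓛 : Set (E → SignType)) (A B : Set E) (S : Set E) : Set E :=
  ⋂₀ {F | F ∈ Flats 𝓛 A B ∧ S ⊆ F}

variable {𝓛 : Set (E → SignType)} {A B : Set E}

lemma inter_mem_flats (h : IsCOM 𝓛) {S T : Set E}
    (hS : S ∈ Flats 𝓛 A B) (hT : T ∈ Flats 𝓛 A B) : S ∩ T ∈ Flats 𝓛 A B := by
  obtain ⟨hSA, hSB, X, hX, hXS⟩ := hS
  obtain ⟨hTA, hTB, Y, hY, hYT⟩ := hT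
  refine ⟨Set.subset_inter hSA hTA, (Set.inter_subset_left).trans hSB,
    SignVec.comp X Y, comp_mem h hX hY, ?_⟩
  rw [zeroSet_comp, hXS, hYT]

lemma sInter_mem_flats (h : IsCOM 𝓛) {T : Set (Set E)}
    (hfin : T.Finite) (hsub : T ⊆ Flats 𝓛 A B) (hne : T.Nonempty) :
    ⋂₀ T ∈ Flats 𝓛 A B := by
  refine Set.Finite.induction_on
    (motive := fun T _ => T ⊆ Flats 𝓛 A B → T.Nonempty → ⋂₀ T ∈ Flats 𝓛 A B)
    T hfin (fun _ hne => absurd hne (by simp)) ?_ hsub hne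
  intro a s ha hs ih hsub' hne'
  rcases s.eq_empty_or_nonempty with rfl | hsne
  · simpa using hsub' (Set.mem_insert a ∅)
  · rw [Set.sInter_insert]
    exact inter_mem_flats h (hsub' (Set.mem_insert a s))
      (ih (fun x hx => hsub' (Set.mem_insert_of_mem a hx)) hsne)

lemma subset_clos (S : Set E) : S ⊆ clos 𝓛 A B S := by
  intro s hs
  exact Set.mem_sInter.2 fun F hF => hF.2 hs

lemma clos_le {F S : Set E} (hF : F ∈ Flats 𝓛 A B) (hSF : S ⊆ F) :
    clos 𝓛 A B S ⊆ F :=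
  Set.sInter_subset_of_mem ⟨hF, hSF⟩

lemma clos_mono {S T : Set E} (hST : S ⊆ T) : clos 𝓛 A B S ⊆ clos 𝓛 A B T := by
  apply Set.sInter_subset_sInter
  rintro F ⟨hF, hTF⟩
  exact ⟨hF, hST.trans hTF⟩

lemma clos_flat {F : Set E} (hF : F ∈ Flats 𝓛 A B) : clos 𝓛 A B F = F :=
  le_antisymm (clos_le hF subset_rfl) (subset_clos F)

lemma clos_mem_flats [Fintype E] (h : IsCOM 𝓛) (hB : B ∈ Flats 𝓛 A B) {S : Set E}
    (hSB : S ⊆ B) : clos 𝓛 A B S ∈ Flats 𝓛 A B := by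
  apply sInter_mem_flats h (Set.toFinite _) (fun F hF => hF.1)
  exact ⟨B, hB, hSB⟩

lemma clos_subset_B (hB : B ∈ Flats 𝓛 A B) {S : Set E} (hSB : S ⊆ B) :
    clos 𝓛 A B S ⊆ B := clos_le hB hSB

/-- Exchange property. -/
lemma exchange [Fintype E] (h : IsCOM 𝓛) (hB : B ∈ Flats 𝓛 A B)
    {F : Set E} (hF : F ∈ Flats 𝓛 A B) {p q : E}
    (hpB : p ∈ B) (hpF : p ∉ F) (hqB : q ∈ B) (hqF : q ∉ F)
    (hq : q ∈ clos 𝓛 A B (F ∪ {p})) : p ∈ clos 𝓛 A B (F ∪ {q}) := by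
  by_contra hp
  -- there is a flat containing F ∪ {q} avoiding p
  rw [clos, Set.mem_sInter] at hp
  push_neg at hp
  obtain ⟨G, ⟨hGfl, hGsub⟩, hpG⟩ := hp
  obtain ⟨hGA, hGB, X, hX, hXG⟩ := hGfl
  obtain ⟨hFA, hFB, W, hW, hWF⟩ := hF
  obtain ⟨hBA, hBB, V, hV, hVB⟩ := hB
  have hWX : SignVec.zeroSet W ⊆ SignVec.zeroSet X := by
    rw [hWF, hXG]; exact (Set.subset_union_left).trans hGsub
  have hXV : SignVec.zeroSet X ⊆ SignVec.zeroSet V := by rw [hXG, hVB]; exact hGB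
  have hXp : X p ≠ 0 := by
    intro h0
    exact hpG (by rw [← hXG]; exact h0)
  have hXq : X q = 0 := by
    have : q ∈ SignVec.zeroSet X := by rw [hXG]; exact hGsub (Set.mem_union_right _ rfl)
    exact this
  have hWq : W q ≠ 0 := by
    intro h0; exact hqF (by rw [← hWF]; exact h0)
  have hVp : V p = 0 := by rw [← mem_zeroSet, hVB]; exact hpB
  have hVq : V q = 0 := by rw [← mem_zeroSet, hVB]; exact hqB
  obtain ⟨Z, hZmem, hZp, hZq, hWZ, hZV⟩ := core h hW hV hX hWX hXV hXp hXq hWq hVp hVq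
  -- z(Z) is a flat containing F ∪ {p}, avoiding q
  have hZfl : SignVec.zeroSet Z ∈ Flats 𝓛 A B := by
    refine ⟨?_, ?_, Z, hZmem, rfl⟩
    · intro x hx
      exact hWZ (by rw [hWF]; exact hFA hx)
    · rw [← hVB]; exact hZV
  have hFZ : F ∪ {p} ⊆ SignVec.zeroSet Z := by
    rintro x (hx | rfl)
    · exact hWZ (by rw [hWF]; exact hx)
    · exact hZp
  have := clos_le hZfl hFZ hq
  exact hZq this

/-- Cover lemma: nothing strictly between `F` and `clos (F ∪ {p})`. -/
lemma cover [Fintype E] (h : IsCOM 𝓛) (hB : B ∈ Flats 𝓛 A B)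
    {F : Set E} (hF : F ∈ Flats 𝓛 A B) {p : E} (hpB : p ∈ B) (hpF : p ∉ F)
    {G : Set E} (hG : G ∈ Flats 𝓛 A B) (hFG : F ⊆ G)
    (hGC : G ⊆ clos 𝓛 A B (F ∪ {p})) (hne : G ≠ F) :
    G = clos 𝓛 A B (F ∪ {p}) := by
  obtain ⟨q, hqG, hqF⟩ : ∃ q, q ∈ G ∧ q ∉ F := by
    by_contra hc
    push_neg at hc
    exact hne (le_antisymm hc hFG)
  have hqB : q ∈ B := hG.2.1 hqG
  have hq : q ∈ clos 𝓛 A B (F ∪ {p}) := hGC hqG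
  have hp : p ∈ clos 𝓛 A B (F ∪ {q}) := exchange h hB hF hpB hpF hqB hqF hq
  have hpG : p ∈ G :=
    clos_le hG (by rintro x (hx | rfl); exacts [hFG hx, hqG]) hp
  refine le_antisymm hGC (clos_le hG ?_)
  rintro x (hx | rfl); exacts [hFG hx, hpG]

end COMAux

/-- **Every closed interval of the poset of zero sets of a COM (ordered by
inclusion) is a geometric lattice.** -/
theorem zeroSets_interval_geometric (E : Type*) [Fintype E]
    (𝓛 : Set (E → SignType)) (h : IsCOM 𝓛)
    (a b : {S : Set E // S ∈ SignVec.zeroSet '' 𝓛}) (hab : a ≤ b) :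
    IsGeometricLatticeOrder (Set.Icc a b) := by
  classical
  set A : Set E := a.1 with hA
  set B : Set E := b.1 with hB
  have hABle : A ⊆ B := hab
  have hAfl : A ∈ COMAux.Flats 𝓛 A B := ⟨subset_rfl, hABle, a.2⟩
  have hBfl : B ∈ COMAux.Flats 𝓛 A B := ⟨hABle, subset_rfl, b.2⟩
  have memfl : ∀ x : Set.Icc a b, (x.1.1 : Set E) ∈ COMAux.Flats 𝓛 A B :=
    fun x => ⟨x.2.1, x.2.2, x.1.2⟩
  let mk : ∀ S : Set E, S ∈ COMAux.Flats 𝓛 A B → Set.Icc a b :=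
    fun S hS => ⟨⟨S, hS.2.2⟩, hS.1, hS.2.1⟩
  have le_iff : ∀ x y : Set.Icc a b, x ≤ y ↔ (x.1.1 : Set E) ⊆ y.1.1 := fun x y => Iff.rfl
  have ext : ∀ x y : Set.Icc a b, (x.1.1 : Set E) = y.1.1 → x = y :=
    fun x y hxy => Subtype.ext (Subtype.ext hxy)
  -- the GLB of {x, y} is the intersection
  have glb : ∀ x y : Set.Icc a b,
      IsGLB {x, y} (mk (x.1.1 ∩ y.1.1) (COMAux.inter_mem_flats h (memfl x) (memfl y))) := by
    intro x y
    constructor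
    · rintro z (rfl | rfl)
      · exact (le_iff _ _).2 Set.inter_subset_left
      · exact (le_iff _ _).2 Set.inter_subset_right
    · intro w hw
      have h1 : w ≤ x := hw (Set.mem_insert _ _)
      have h2 : w ≤ y := hw (Set.mem_insert_of_mem _ rfl)
      exact (le_iff _ _).2 (Set.subset_inter ((le_iff _ _).1 h1) ((le_iff _ _).1 h2))
  -- the LUB of {x, y} is the closure of the union
  have union_subB : ∀ x y : Set.Icc a b, (x.1.1 : Set E) ∪ y.1.1 ⊆ B :=
    fun x y => Set.union_subset (memfl x).2.1 (memfl y).2.1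
  have lub : ∀ x y : Set.Icc a b,
      IsLUB {x, y} (mk (COMAux.clos 𝓛 A B (x.1.1 ∪ y.1.1))
        (COMAux.clos_mem_flats h hBfl (union_subB x y))) := by
    intro x y
    constructor
    · rintro z (rfl | rfl)
      · exact (le_iff _ _).2 (Set.subset_union_left.trans (COMAux.subset_clos _))
      · exact (le_iff _ _).2 (Set.subset_union_right.trans (COMAux.subset_clos _))
    · intro w hw
      have h1 : x ≤ w := hw (Set.mem_insert _ _)
      have h2 : y ≤ w := hw (Set.mem_insert_of_mem _ rfl)
      exact (le_iff _ _).2 (COMAux.clos_le (memfl w)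
        (Set.union_subset ((le_iff _ _).1 h1) ((le_iff _ _).1 h2)))
  -- bot
  let bot : Set.Icc a b := mk A hAfl
  have bot_isbot : IsBot bot := fun x => (le_iff _ _).2 (memfl x).1
  -- atoms: for p ∈ B \ A, clos (A ∪ {p}) covers bot
  have atom_cov : ∀ (p : E) (hpB : p ∈ B) (hpA : p ∉ A),
      bot ⋖ mk (COMAux.clos 𝓛 A B (A ∪ {p}))
        (COMAux.clos_mem_flats h hBfl
          (Set.union_subset hABle (Set.singleton_subset_iff.2 hpB))) := by
    intro p hpB hpA
    have hpc : p ∈ COMAux.clos 𝓛 A B (A ∪ {p}) :=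
      COMAux.subset_clos _ (Set.mem_union_right _ rfl)
    constructor
    · refine lt_of_le_of_ne ((le_iff _ _).2 (Set.subset_union_left.trans (COMAux.subset_clos _))) ?_
      intro he
      have hAc : A = COMAux.clos 𝓛 A B (A ∪ {p}) :=
        congrArg (fun z : Set.Icc a b => (z.1.1 : Set E)) he
      exact hpA (by rw [hAc]; exact hpc)
    · intro c hc hct
      have hGfl := memfl c
      have hFG : A ⊆ c.1.1 := (le_iff _ _).1 hc.le
      have hGC : (c.1.1 : Set E) ⊆ COMAux.clos 𝓛 A B (A ∪ {p}) := (le_iff _ _).1 hct.le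
      have hne : (c.1.1 : Set E) ≠ A := fun he => hc.ne (ext _ _ he.symm)
      have := COMAux.cover h hBfl hAfl hpB hpA hGfl hFG hGC hne
      exact hct.ne (ext _ _ this)
  refine ⟨inferInstance, fun x y => ⟨_, glb x y⟩, fun x y => ⟨_, lub x y⟩, ⟨bot, bot_isbot, ?_⟩, ?_⟩
  · -- atomistic
    intro x
    constructor
    · rintro t ⟨-, htx⟩
      exact htx
    · intro u hu
      refine (le_iff _ _).2 ?_
      intro p hp
      by_cases hpA : p ∈ A
      · exact (memfl u).1 hpA
      · have hpB : p ∈ B := (memfl x).2.1 hp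
        have htx : mk (COMAux.clos 𝓛 A B (A ∪ {p}))
            (COMAux.clos_mem_flats h hBfl
              (Set.union_subset hABle (Set.singleton_subset_iff.2 hpB))) ≤ x :=
          (le_iff _ _).2 (COMAux.clos_le (memfl x)
            (Set.union_subset (memfl x).1 (Set.singleton_subset_iff.2 hp)))
        have htu := hu ⟨atom_cov p hpB hpA, htx⟩
        exact (le_iff _ _).1 htu (COMAux.subset_clos _ (Set.mem_union_right _ rfl))
  · -- semimodularity
    intro x y m j hglb hlub hcov
    have hm : m = mk (x.1.1 ∩ y.1.1) (COMAux.inter_mem_flats h (memfl x) (memfl y)) :=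
      hglb.unique (glb x y)
    have hj : j = mk (COMAux.clos 𝓛 A B (x.1.1 ∪ y.1.1))
        (COMAux.clos_mem_flats h hBfl (union_subB x y)) := hlub.unique (lub x y)
    have hmval : (m.1.1 : Set E) = x.1.1 ∩ y.1.1 :=
      congrArg (fun z : Set.Icc a b => (z.1.1 : Set E)) hm
    have hjval : (j.1.1 : Set E) = COMAux.clos 𝓛 A B (x.1.1 ∪ y.1.1) :=
      congrArg (fun z : Set.Icc a b => (z.1.1 : Set E)) hj
    -- pick p ∈ x \ m
    obtain ⟨p, hpx, hpm⟩ : ∃ p, p ∈ (x.1.1 : Set E) ∧ p ∉ (m.1.1 : Set E) := by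
      by_contra hcon
      push_neg at hcon
      exact hcov.lt.ne (ext _ _ (le_antisymm hcon ((le_iff _ _).1 hcov.lt.le))).symm
    have hpy : p ∉ (y.1.1 : Set E) := fun hpy => hpm (by rw [hmval]; exact ⟨hpx, hpy⟩)
    have hpB : p ∈ B := (memfl x).2.1 hpx
    have hmB : (m.1.1 : Set E) ∪ {p} ⊆ B :=
      Set.union_subset (memfl m).2.1 (Set.singleton_subset_iff.2 hpB)
    -- x = clos (m ∪ {p})
    have hmw : m < mk (COMAux.clos 𝓛 A B (m.1.1 ∪ {p}))
        (COMAux.clos_mem_flats h hBfl hmB) := by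
      refine lt_of_le_of_ne ((le_iff _ _).2 (Set.subset_union_left.trans (COMAux.subset_clos _))) ?_
      intro he
      have hmc : (m.1.1 : Set E) = COMAux.clos 𝓛 A B (m.1.1 ∪ {p}) :=
        congrArg (fun z : Set.Icc a b => (z.1.1 : Set E)) he
      exact hpm (by rw [hmc]; exact COMAux.subset_clos _ (Set.mem_union_right _ rfl))
    have hwx : mk (COMAux.clos 𝓛 A B (m.1.1 ∪ {p}))
        (COMAux.clos_mem_flats h hBfl hmB) ≤ x :=
      (le_iff _ _).2 (COMAux.clos_le (memfl x)
        (Set.union_subset (by rw [hmval]; exact Set.inter_subset_left)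
          (Set.singleton_subset_iff.2 hpx)))
    have hxw : mk (COMAux.clos 𝓛 A B (m.1.1 ∪ {p}))
        (COMAux.clos_mem_flats h hBfl hmB) = x := by
      by_contra hne
      exact hcov.2 hmw (lt_of_le_of_ne hwx hne)
    have hxval : (x.1.1 : Set E) = COMAux.clos 𝓛 A B (m.1.1 ∪ {p}) :=
      (congrArg (fun z : Set.Icc a b => (z.1.1 : Set E)) hxw).symm
    -- j = clos (y ∪ {p})
    have hyB : (y.1.1 : Set E) ∪ {p} ⊆ B :=
      Set.union_subset (memfl y).2.1 (Set.singleton_subset_iff.2 hpB)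
    have hjy : (j.1.1 : Set E) = COMAux.clos 𝓛 A B (y.1.1 ∪ {p}) := by
      rw [hjval]
      apply le_antisymm
      · apply COMAux.clos_le (COMAux.clos_mem_flats h hBfl hyB)
        apply Set.union_subset
        · rw [hxval]
          apply COMAux.clos_mono
          apply Set.union_subset
          · rw [hmval]
            exact Set.inter_subset_right.trans Set.subset_union_left
          · exact Set.subset_union_right
        · exact Set.subset_union_left.trans (COMAux.subset_clos _)
      · apply COMAux.clos_mono
        apply Set.union_subset
        · exact Set.subset_union_right
        · exact Set.singleton_subset_iff.2 (Set.mem_union_left _ hpx)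
    -- y ⋖ j
    have hpj : p ∈ (j.1.1 : Set E) := by
      rw [hjy]; exact COMAux.subset_clos _ (Set.mem_union_right _ rfl)
    constructor
    · refine lt_of_le_of_ne (hlub.1 (Set.mem_insert_of_mem _ rfl)) ?_
      intro he
      exact hpy (by rw [show (y.1.1 : Set E) = j.1.1 from congrArg (fun z : Set.Icc a b => (z.1.1 : Set E)) he]; exact hpj)
    · intro c hc hcj
      have hne : (c.1.1 : Set E) ≠ y.1.1 := fun he => hc.ne (ext _ _ he.symm)
      have := COMAux.cover h hBfl (memfl y) hpB hpy (memfl c)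
        ((le_iff _ _).1 hc.le) (by rw [← hjy]; exact (le_iff _ _).1 hcj.le) hne
      exact hcj.ne (ext _ _ (by rw [this, ← hjy]))
end

section
/- Let (E, 𝓛) be a complex of oriented matroids (COM) and let X ∈ 𝓛. Let F(X) = {X∘Y : Y ∈ 𝓛} be the face of X and let X̲ = {e ∈ E : X_e ≠ 0} be its support. Then the pair (E \ X̲, F(X)\X̲) — the ground set E \ X̲ together with the restrictions of the sign vectors of F(X) to E \ X̲ — is an oriented matroid. -/
/-- An oriented matroid: a set of sign vectors satisfying symmetry (S),
composition (C) and strong elimination (SE). -/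
def IsOM {E : Type*} (𝓛 : Set (E → SignType)) : Prop :=
  (∀ X ∈ 𝓛, -X ∈ 𝓛) ∧ (∀ X ∈ 𝓛, ∀ Y ∈ 𝓛, SignVec.comp X Y ∈ 𝓛) ∧
    StrongElimination 𝓛

/-- The face `F(X) = {X ∘ Y : Y ∈ 𝓛}` of a covector `X`. -/
def SignVec.face {E : Type*} (𝓛 : Set (E → SignType)) (X : E → SignType) :
    Set (E → SignType) :=
  {W | ∃ Y ∈ 𝓛, W = SignVec.comp X Y}

/-- **The restriction of a face to the zero set of its covector is an
oriented matroid**: for a COM `(E, 𝓛)` and `X ∈ 𝓛`, the pair consisting of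
the ground set `E \ X̲ = z(X)` together with the restrictions of the sign
vectors of `F(X)` to `z(X)` is an OM. -/
theorem face_restrict_isOM (E : Type*) [Fintype E]
    (𝓛 : Set (E → SignType)) (h : IsCOM 𝓛) (X : E → SignType) (hX : X ∈ 𝓛) :
    IsOM ((fun W => fun e : {e : E // X e = 0} => W e.1) ''
      SignVec.face 𝓛 X) := by
  obtain ⟨hFS, hSE⟩ := h
  have hcomp : ∀ A ∈ 𝓛, ∀ B ∈ 𝓛, SignVec.comp A B ∈ 𝓛 := by
    intro A hA B hB
    have h2 := hFS A hA _ (hFS A hA B hB)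
    convert h2 using 1
    funext e
    simp only [SignVec.comp, Pi.neg_apply]
    by_cases h0 : A e = 0 <;> simp [h0]
  refine ⟨?_, ?_, ?_⟩
  · rintro _ ⟨W, ⟨Y, hY, rfl⟩, rfl⟩
    refine ⟨SignVec.comp X (SignVec.comp X (-Y)), ⟨_, hFS X hX Y hY, rfl⟩, ?_⟩
    funext e
    obtain ⟨e, he⟩ := e
    simp [SignVec.comp, he]
  · rintro _ ⟨W, ⟨Y, hY, rfl⟩, rfl⟩ _ ⟨W', ⟨Y', hY', rfl⟩, rfl⟩
    refine ⟨SignVec.comp X (SignVec.comp Y Y'), ⟨_, hcomp Y hY Y' hY', rfl⟩, ?_⟩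
    funext e
    obtain ⟨e, he⟩ := e
    simp [SignVec.comp, he]
  · rintro _ ⟨W, ⟨Y, hY, rfl⟩, rfl⟩ _ ⟨W', ⟨Y', hY', rfl⟩, rfl⟩ e ⟨he1, he2⟩
    obtain ⟨Z, hZ, hZe, hZf⟩ :=
      hSE _ (hcomp X hX Y hY) _ (hcomp X hX Y' hY') e.1 ⟨he1, he2⟩
    refine ⟨_, ⟨SignVec.comp X Z, ⟨Z, hZ, rfl⟩, rfl⟩, ?_, ?_⟩
    · simp [SignVec.comp, e.2, hZe]
    · intro f hf
      have hzf := hZf f.1 hf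
      simp only [SignVec.comp, f.2, if_true] at hzf ⊢
      exact hzf
end

section
/- Let P be a bouquet of geometric lattices equipped with a convex labeling l. Then a maximal chain C = [x_1 ⋖ x_2 ⋖ … ⋖ x_k] of P is neat if and only if the labels l(x_1), l(x_2), …, l(x_k) are pairwise distinct. -/
/-!
Statement 0: determinant of the chain matrix of a bouquet of geometric lattices.
-/

open scoped Classical

/-- **For a convex labeling, a maximal chain is neat iff its labels are
pairwise distinct.**  A labeling `l` is convex if whenever `l x ≤ x' < x`
then `l x' = l x`. -/
theorem neat_iff_labels_distinct
    (P : Type*) [PartialOrder P] [Fintype P]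
    (hP : IsBouquetOfGeometricLattices P)
    (b : P) (hb : IsBot b)
    (l : P → P) (hl : IsLabeling b l)
    (hconvex : ∀ x x' : P, l x ≤ x' → x' < x → l x' = l x)
    (L : List P) (hL : IsMaximalChain b L) :
    IsNeatChain b l L ↔ (L.map l).Nodup := by
  obtain ⟨hne, hchain, hmax⟩ := hL
  have hlt : List.Pairwise (· < ·) (b :: L) :=
    List.isChain_iff_pairwise.mp (List.IsChain.imp (fun a b h => h.lt) hchain)
  have hpw := List.pairwise_iff_get.mp hlt
  have hcons : ∀ (i : ℕ) (h : i < L.length),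
      (b :: L).get ⟨i + 1, by simpa using Nat.succ_lt_succ h⟩ = L.get ⟨i, h⟩ := fun i h => rfl
  have hb_lt : ∀ i : Fin L.length, b < L.get i := by
    intro i
    have h := hpw ⟨0, by simp⟩ ⟨(i : ℕ) + 1, by simpa using Nat.succ_lt_succ i.isLt⟩
      (Fin.mk_lt_mk.mpr (by omega))
    rw [hcons (i : ℕ) i.isLt] at h
    exact h
  have hmono : ∀ i j : Fin L.length, (i : ℕ) ≤ (j : ℕ) → L.get i ≤ L.get j := by
    intro i j hij
    rcases eq_or_lt_of_le hij with h | h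
    · exact le_of_eq (congrArg _ (Fin.ext h))
    · have h2 := hpw ⟨(i : ℕ) + 1, by simpa using Nat.succ_lt_succ i.isLt⟩
        ⟨(j : ℕ) + 1, by simpa using Nat.succ_lt_succ j.isLt⟩ (Fin.mk_lt_mk.mpr (by omega))
      rw [hcons (i : ℕ) i.isLt, hcons (j : ℕ) j.isLt] at h2
      exact h2.le
  have hgetD : ∀ (i : ℕ) (h : i < L.length), L.getD i b = L.get ⟨i, h⟩ := by
    intro i h
    simp [List.getD_eq_getElem?_getD, List.getElem?_eq_getElem h]
  have hne_b : ∀ i : Fin L.length, L.get i ≠ b := fun i => (hb_lt i).ne'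
  have hnodup_iff : (L.map l).Nodup ↔
      ∀ i j : Fin L.length, (i : ℕ) < (j : ℕ) → l (L.get i) ≠ l (L.get j) := by
    rw [List.Nodup, List.pairwise_map, List.pairwise_iff_get]
    exact Iff.rfl
  constructor
  · rintro ⟨-, hneat⟩
    rw [hnodup_iff]
    intro i j hij heq
    obtain ⟨m, hm⟩ : ∃ m, (j : ℕ) = m + 1 := ⟨(j : ℕ) - 1, by omega⟩
    have hm1 : m + 1 < L.length := hm ▸ j.isLt
    have h2 := (hneat (j : ℕ) j.isLt).2
    rw [hm, List.getD_cons_succ, hgetD (m + 1) hm1, hgetD m (by omega)] at h2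
    apply h2
    have hjget : L.get ⟨m + 1, hm1⟩ = L.get j := congrArg _ (Fin.ext hm.symm)
    rw [hjget, ← heq]
    calc l (L.get i) ≤ L.get i := (hl (L.get i) (hne_b i)).2
      _ ≤ L.get ⟨m, by omega⟩ := hmono _ _ (by simp; omega)
  · intro hnd
    refine ⟨⟨hne, hchain, hmax⟩, ?_⟩
    intro i hi
    rw [hgetD i hi]
    obtain ⟨hatom, hle⟩ := hl (L.get ⟨i, hi⟩) (hne_b ⟨i, hi⟩)
    refine ⟨hle, ?_⟩
    match i, hi with
    | 0, hi =>
      simp only [List.getD_cons_zero]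
      exact fun h => absurd h hatom.lt.not_ge
    | m + 1, hi =>
      rw [List.getD_cons_succ, hgetD m (by omega)]
      intro hle2
      have hlt' : L.get ⟨m, by omega⟩ < L.get ⟨m + 1, hi⟩ := by
        have h3 := hpw ⟨m + 1, by simpa using Nat.succ_lt_succ (show m < L.length by omega)⟩
          ⟨m + 2, show m + 2 < (b :: L).length from Nat.succ_lt_succ hi⟩ (Fin.mk_lt_mk.mpr (by omega))
        rw [hcons m (by omega), hcons (m + 1) hi] at h3
        exact h3
      have heq' := hconvex (L.get ⟨m + 1, hi⟩) (L.get ⟨m, by omega⟩) hle2 hlt'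
      exact (hnodup_iff.mp hnd ⟨m, by omega⟩ ⟨m + 1, hi⟩ (by simp)) heq'
end
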